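/- Let G be a finite simple graph whose vertex set V has cardinality 2m+1 with m ≥ 1, with no marked vertices. Call a subset F ⊆ V free if it is an independent set (no two of its vertices are adjacent). Suppose there exists a free set F of size m with V \ F free, and moreover that for every free subset F' ⊆ V of size m, the complement V \ F' is also free. Then G has no edges at all. -/
import Mathlib


/-- Concluding combinatorial step of the main theorem: on `2m+1` vertices
(`m ≥ 1`), if there is an independent ("free") set `F` of size `m` whose
complement is also independent, and for *every* independent set `F'` of size `m`
the complement `V \ F'` is independent, then the graph has no edges at all. -/
theorem no_edges_of_free_complements
    {V : Type*} [Fintype V] [DecidableEq V] (G : SimpleGraph V)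
    (m : ℕ) (hm : 1 ≤ m) (hV : Fintype.card V = 2 * m + 1)
    (hex : ∃ F : Finset V, F.card = m ∧
      (∀ v ∈ F, ∀ w ∈ F, ¬G.Adj v w) ∧
      (∀ v ∈ Fᶜ, ∀ w ∈ Fᶜ, ¬G.Adj v w))
    (hall : ∀ F' : Finset V, F'.card = m →
      (∀ v ∈ F', ∀ w ∈ F', ¬G.Adj v w) →
      (∀ v ∈ F'ᶜ, ∀ w ∈ F'ᶜ, ¬G.Adj v w)) :
    G = ⊥ := by
  obtain ⟨F, hFcard, hFfree, hFcfree⟩ := hex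
  have hFc : Fᶜ.card = m + 1 := by
    have := Finset.card_compl F
    omega
  -- every vertex in Fᶜ is isolated
  have key : ∀ w ∈ Fᶜ, ∀ u, ¬G.Adj w u := by
    intro w hw u hadj
    by_cases hu : u ∈ Fᶜ
    · exact hFcfree w hw u hu hadj
    · -- u ∈ F; use F' = Fᶜ.erase w
      set F' : Finset V := Fᶜ.erase w with hF'
      have hF'card : F'.card = m := by
        rw [hF', Finset.card_erase_of_mem hw, hFc]; omega
        -- trailing

      have hF'free : ∀ v ∈ F', ∀ x ∈ F', ¬G.Adj v x := by
        intro v hv x hx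
        exact hFcfree v (Finset.mem_of_mem_erase hv) x (Finset.mem_of_mem_erase hx)
      have hcomp := hall F' hF'card hF'free
      have hwc : w ∈ F'ᶜ := by
        simp [hF', Finset.mem_compl]
      have huc : u ∈ F'ᶜ := by
        simp only [hF', Finset.mem_compl, Finset.mem_erase]
        intro h
        exact hu (Finset.mem_compl.mpr h.2)
      exact hcomp w hwc u huc hadj
  ext v u
  simp only [SimpleGraph.bot_adj, iff_false]
  intro hadj
  by_cases hv : v ∈ Fᶜ
  · exact key v hv u hadj
  by_cases hu : u ∈ Fᶜ
  · exact key u hu v hadj.symm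
  · exact hFfree v (by simpa using hv) u (by simpa using hu) hadj
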